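/- arXiv:1304.0203 — 5 statements merged into one kernel-verified Lean document; each statement's English description precedes it below -/
import Mathlib

section
/- For every integer k ≥ 0, the number 12^{3k} · binom(-5/12, k) · binom(-1/12, k) is an integer, where binom(a,k) = a(a-1)···(a-k+1)/k! is the generalized binomial coefficient. -/
open Finset

/-- The generalized binomial coefficient `binom a k = a(a-1)⋯(a-k+1)/k!` for `a : ℚ`. -/
noncomputable def genBinom (a : ℚ) (k : ℕ) : ℚ :=
  (∏ j ∈ Finset.range k, (a - j)) / (Nat.factorial k)

/-- In each full block of `m` consecutive integers there is a `j` with `m ∣ 12 j + c`,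
provided `m` is coprime to `12`. -/
lemma count_lower (m k c : ℕ) (hm : 1 ≤ m) (hcop : Nat.Coprime 12 m) :
    k / m ≤ ((Finset.range k).filter (fun j => m ∣ 12 * j + c)).card := by
  haveI : NeZero m := ⟨by omega⟩
  set r : ℕ := ((-(c : ZMod m)) * (12 : ZMod m)⁻¹).val with hrdef
  have hrm : r < m := ZMod.val_lt _
  have key : ∀ t : ℕ, m ∣ 12 * (t * m + r) + c := by
    intro t
    rw [← ZMod.natCast_eq_zero_iff]
    push_cast
    rw [hrdef, ZMod.natCast_zmod_val, ZMod.natCast_self]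
    have h12 : ((12 : ℕ) : ZMod m) * ((12 : ℕ) : ZMod m)⁻¹ = 1 :=
      ZMod.coe_mul_inv_eq_one 12 hcop
    push_cast at h12
    linear_combination (-(c : ZMod m)) * h12
  have hinj : Set.InjOn (fun t => t * m + r) (Finset.range (k / m)) := by
    intro a _ b _ hab
    simp only at hab
    have : a * m = b * m := by omega
    exact Nat.eq_of_mul_eq_mul_right (by omega) this
  have hmaps : ∀ t ∈ Finset.range (k / m),
      (t * m + r) ∈ (Finset.range k).filter (fun j => m ∣ 12 * j + c) := by
    intro t ht
    rw [Finset.mem_range] at ht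
    rw [Finset.mem_filter, Finset.mem_range]
    refine ⟨?_, key t⟩
    have h1 : t * m + r < (t + 1) * m := by nlinarith
    have h2 : (t + 1) * m ≤ (k / m) * m := Nat.mul_le_mul_right m ht
    have h3 : (k / m) * m ≤ k := Nat.div_mul_le_self k m
    omega
  calc k / m = (Finset.range (k / m)).card := (Finset.card_range _).symm
    _ ≤ _ := Finset.card_le_card_of_injOn _ hmaps hinj

/-- Legendre-style lower bound: for a prime `p` coprime to `12`, the `p`-adic valuation
of `∏_{j<k} (12j + c)` is at least that of `k!`. -/
lemma factorization_prod_lower {p : ℕ} (hp : p.Prime) (hcop : Nat.Coprime 12 p)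
    (c k : ℕ) (hc : 0 < c) :
    (Nat.factorial k).factorization p ≤
      (∏ j ∈ Finset.range k, (12 * j + c)).factorization p := by
  haveI := Fact.mk hp
  have hlog : Nat.log p k < k + 1 := Nat.lt_succ_of_le (Nat.log_le_self p k)
  have hN0 : ∀ j ∈ Finset.range k, 12 * j + c ≠ 0 := fun j _ => by omega
  have hprod := Nat.factorization_prod hN0
  rw [Nat.factorization_def _ hp, padicValNat_factorial hlog]
  calc ∑ i ∈ Finset.Ico 1 (k + 1), k / p ^ i
      ≤ ∑ i ∈ Finset.Ico 1 (k + 1),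
          ((Finset.range k).filter (fun j => p ^ i ∣ 12 * j + c)).card := by
        refine Finset.sum_le_sum fun i _ => ?_
        exact count_lower (p ^ i) k c (Nat.one_le_iff_ne_zero.mpr (pow_ne_zero i hp.pos.ne'))
          (hcop.pow_right i)
    _ = ∑ j ∈ Finset.range k,
          ((Finset.Ico 1 (k + 1)).filter (fun i => p ^ i ∣ 12 * j + c)).card := by
        simp_rw [Finset.card_filter]
        exact Finset.sum_comm
    _ ≤ ∑ j ∈ Finset.range k, (12 * j + c).factorization p := by
        refine Finset.sum_le_sum fun j hj => ?_
        have ha : 12 * j + c ≠ 0 := by omega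
        have hsub : (Finset.Ico 1 (k + 1)).filter (fun i => p ^ i ∣ 12 * j + c) ⊆
            Finset.Icc 1 ((12 * j + c).factorization p) := by
          intro i hi
          rw [Finset.mem_filter, Finset.mem_Ico] at hi
          rw [Finset.mem_Icc]
          exact ⟨hi.1.1, (hp.pow_dvd_iff_le_factorization ha).mp hi.2⟩
        calc _ ≤ (Finset.Icc 1 ((12 * j + c).factorization p)).card :=
              Finset.card_le_card hsub
          _ = (12 * j + c).factorization p := by rw [Nat.card_Icc]; omega
    _ = (∏ j ∈ Finset.range k, (12 * j + c)).factorization p := by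
        rw [hprod, Finset.sum_apply']

/-- valuation of `k!` at 2 is at most `k`. -/
lemma val_two_factorial_le (k : ℕ) : (Nat.factorial k).factorization 2 ≤ k := by
  haveI : Fact (Nat.Prime 2) := ⟨Nat.prime_two⟩
  rw [Nat.factorization_def _ Nat.prime_two]
  have := sub_one_mul_padicValNat_factorial (p := 2) k
  omega

/-- twice the valuation of `k!` at 3 is at most `k`. -/
lemma val_three_factorial_le (k : ℕ) : 2 * (Nat.factorial k).factorization 3 ≤ k := by
  haveI : Fact (Nat.Prime 3) := ⟨Nat.prime_three⟩
  rw [Nat.factorization_def _ Nat.prime_three]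
  have := sub_one_mul_padicValNat_factorial (p := 3) k
  omega

lemma key_dvd (k : ℕ) :
    (Nat.factorial k) ^ 2 ∣
      12 ^ k * (∏ j ∈ Finset.range k, (12 * j + 1)) * (∏ j ∈ Finset.range k, (12 * j + 5)) := by
  have hN1 : (∏ j ∈ Finset.range k, (12 * j + 1)) ≠ 0 :=
    Finset.prod_ne_zero_iff.mpr fun j _ => by omega
  have hN5 : (∏ j ∈ Finset.range k, (12 * j + 5)) ≠ 0 :=
    Finset.prod_ne_zero_iff.mpr fun j _ => by omega
  have h12 : (12 : ℕ) ^ k ≠ 0 := pow_ne_zero k (by norm_num)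
  have hF : (Nat.factorial k) ^ 2 ≠ 0 := pow_ne_zero 2 k.factorial_ne_zero
  have hRHS : 12 ^ k * (∏ j ∈ Finset.range k, (12 * j + 1)) *
      (∏ j ∈ Finset.range k, (12 * j + 5)) ≠ 0 := by
    exact mul_ne_zero (mul_ne_zero h12 hN1) hN5
  rw [← Nat.factorization_le_iff_dvd hF hRHS, Finsupp.le_def]
  intro p
  by_cases hp : p.Prime
  · rw [Nat.factorization_mul (mul_ne_zero h12 hN1) hN5,
      Nat.factorization_mul h12 hN1, Nat.factorization_pow, Nat.factorization_pow]
    simp only [Finsupp.coe_add, Finsupp.coe_smul, Pi.add_apply, Pi.smul_apply, smul_eq_mul]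
    by_cases hp2 : p = 2
    · subst hp2
      have h2 : (Nat.factorization 12) 2 = 2 := by
        rw [show (12 : ℕ) = 2 ^ 2 * 3 from by norm_num,
          Nat.factorization_mul (by norm_num) (by norm_num),
          Nat.Prime.factorization_pow Nat.prime_two,
          Nat.Prime.factorization Nat.prime_three]
        simp
      rw [h2]
      have := val_two_factorial_le k
      omega
    by_cases hp3 : p = 3
    · subst hp3
      have h3 : (Nat.factorization 12) 3 = 1 := by
        rw [show (12 : ℕ) = 2 ^ 2 * 3 from by norm_num,
          Nat.factorization_mul (by norm_num) (by norm_num),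
          Nat.Prime.factorization_pow Nat.prime_two,
          Nat.Prime.factorization Nat.prime_three]
        simp
      rw [h3]
      have := val_three_factorial_le k
      omega
    · -- p coprime to 12
      have hcop : Nat.Coprime 12 p := by
        refine (Nat.coprime_comm.mp (hp.coprime_iff_not_dvd.mpr ?_))
        intro hdvd
        have hle : p ≤ 12 := Nat.le_of_dvd (by norm_num) hdvd
        have h2le : 2 ≤ p := hp.two_le
        interval_cases p <;> first | omega | exact absurd hp (by decide)
      have b1 := factorization_prod_lower hp hcop 1 k (by norm_num)
      have b5 := factorization_prod_lower hp hcop 5 k (by norm_num)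
      omega
  · simp [Nat.factorization_eq_zero_of_not_prime _ hp]

lemma prod_shift (c : ℕ) (k : ℕ) :
    (12 : ℚ) ^ k * ∏ j ∈ Finset.range k, ((-(c : ℚ)/12) - j) =
      (-1 : ℚ) ^ k * ((∏ j ∈ Finset.range k, (12 * j + c) : ℕ) : ℚ) := by
  induction k with
  | zero => simp
  | succ n ih =>
    rw [Finset.prod_range_succ, Finset.prod_range_succ]
    have ha : (12 : ℚ) * ((-(c : ℚ)/12) - n) = -(((12 * n + c : ℕ)) : ℚ) := by
      push_cast; ring
    calc (12 : ℚ) ^ (n + 1) *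
          ((∏ j ∈ Finset.range n, ((-(c : ℚ)/12) - j)) * ((-(c : ℚ)/12) - n))
        = ((12 : ℚ) ^ n * ∏ j ∈ Finset.range n, ((-(c : ℚ)/12) - j)) *
            ((12 : ℚ) * ((-(c : ℚ)/12) - n)) := by ring
      _ = ((-1 : ℚ) ^ n * ((∏ j ∈ Finset.range n, (12 * j + c) : ℕ) : ℚ)) *
            (-(((12 * n + c : ℕ)) : ℚ)) := by rw [ih, ha]
      _ = (-1 : ℚ) ^ (n + 1) *
            (((∏ j ∈ Finset.range n, (12 * j + c)) * (12 * n + c) : ℕ) : ℚ) := by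
          push_cast; ring

/-- For every integer `k ≥ 0`, `12^(3k) * binom(-5/12, k) * binom(-1/12, k)` is an integer. -/
theorem twelve_pow_mul_genBinom_isInt (k : ℕ) :
    ∃ z : ℤ, (12 : ℚ) ^ (3 * k) * genBinom (-5/12) k * genBinom (-1/12) k = z := by
  obtain ⟨d, hd⟩ := key_dvd k
  refine ⟨d, ?_⟩
  have hF : ((Nat.factorial k : ℚ)) ≠ 0 := Nat.cast_ne_zero.mpr k.factorial_ne_zero
  have e5 := prod_shift 5 k
  have e1 := prod_shift 1 k
  simp only [Nat.cast_ofNat, Nat.cast_one] at e5 e1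
  have hq : ((12 ^ k * (∏ j ∈ Finset.range k, (12 * j + 1)) *
      (∏ j ∈ Finset.range k, (12 * j + 5)) : ℕ) : ℚ) =
      ((Nat.factorial k : ℚ)) ^ 2 * (d : ℚ) := by
    rw [hd]; push_cast; ring
  have main : (12 : ℚ) ^ (3 * k) * genBinom (-5/12) k * genBinom (-1/12) k *
      ((Nat.factorial k : ℚ)) ^ 2 =
      ((12 : ℚ) ^ k * ∏ j ∈ Finset.range k, ((-5/12 : ℚ) - j)) *
        ((12 : ℚ) ^ k * ∏ j ∈ Finset.range k, ((-1/12 : ℚ) - j)) * (12 : ℚ) ^ k := by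
    unfold genBinom
    have h3k : (12 : ℚ) ^ (3 * k) = 12 ^ k * 12 ^ k * 12 ^ k := by
      rw [show 3 * k = k + (k + k) by ring, pow_add, pow_add]; ring
    rw [h3k]
    field_simp
  have hsign : ((-1 : ℚ)) ^ k * (-1) ^ k = 1 := by
    rw [← mul_pow]; norm_num
  have main2 : (12 : ℚ) ^ (3 * k) * genBinom (-5/12) k * genBinom (-1/12) k *
      ((Nat.factorial k : ℚ)) ^ 2 = (d : ℚ) * ((Nat.factorial k : ℚ)) ^ 2 := by
    rw [main, e5, e1]
    push_cast at hq ⊢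
    linear_combination ((-1 : ℚ) ^ k * (-1 : ℚ) ^ k) * hq +
      ((Nat.factorial k : ℚ) ^ 2 * (d : ℚ)) * hsign
  exact mul_right_cancel₀ (pow_ne_zero 2 hF) main2
end

section
/- The formal power series (1+8z)^{-1/4} has integer coefficients, i.e., the sequence a_n = (2^n/n!)·∏_{k=0}^{n-1}(4k+1) (up to sign for the substitution z → -z) consists of integers: for all n ≥ 0, (2^n/n!)·∏_{k=0}^{n-1}(4k+1) ∈ ℤ. -/
/-!
The series is `f = (1 - 8z)^(-1/4)`, and `f² = (1 - 8z)^(-1/2) = ∑ 2ⁿ C(2n, n) zⁿ`, whose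
coefficients of positive index lie in `4ℤ` because `C(2n, n)` is even. If `f(0) = 1`, `d` is even
and the positive coefficients of `f²` lie in `2dℤ`, then those of `f` lie in `dℤ`: by induction,
`2 fₙ = (f²)ₙ - ∑_{0<i<n} fᵢ f_{n-i}` and each product in the sum lies in `d²ℤ ⊆ 2dℤ`.
-/

open Finset Polynomial PowerSeries AddSubgroup

theorem Ring.choose_eq_prod_range_div {K : Type*} [Field K] [CharZero K] (r : K) (n : ℕ) :
    Ring.choose r n = (∏ k ∈ range n, (r - k)) / n.factorial := by
  rw [Ring.choose_eq_smul, ← descPochhammer_eval_eq_prod_range, smul_eq_mul, inv_mul_eq_div,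
    ← descPochhammer_map (Int.castRingHom K), eval_map, ← eval₂_smulOneHom_eq_smeval]
  congr 2
  exact RingHom.ext_int _ _

theorem Ring.neg_pow_mul_choose_neg_inv {K : Type*} [Field K] [CharZero K] {m : K} (hm : m ≠ 0)
    (n : ℕ) : (-m) ^ n * Ring.choose (-m⁻¹) n = (∏ k ∈ range n, (m * k + 1)) / n.factorial := by
  rw [Ring.choose_eq_prod_range_div, mul_div_assoc']
  nth_rw 1 [← card_range n]
  rw [pow_card_mul_prod]
  congr 1
  refine prod_congr rfl fun k _ => ?_
  field_simp
  ring

theorem Nat.two_pow_mul_prod_odd_eq_factorial_mul_centralBinom (n : ℕ) :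
    2 ^ n * ∏ k ∈ range n, (2 * k + 1) = n.factorial * n.centralBinom := by
  induction n with
  | zero => simp
  | succ n ih =>
    rw [prod_range_succ, Nat.factorial_succ, pow_succ]
    calc 2 ^ n * 2 * ((∏ k ∈ range n, (2 * k + 1)) * (2 * n + 1))
        = 2 * (2 * n + 1) * (2 ^ n * ∏ k ∈ range n, (2 * k + 1)) := by ring
      _ = n.factorial * ((n + 1) * (n + 1).centralBinom) := by
        rw [ih, Nat.succ_mul_centralBinom_succ]; ring
      _ = _ := by ring

section
variable {R : Type*} [CommRing R]

theorem mul_mem_zmultiples_two_mul_of_even {d : ℤ} (hd : Even d) {x y : R}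
    (hx : x ∈ zmultiples (d : R)) (hy : y ∈ zmultiples (d : R)) :
    x * y ∈ zmultiples ((2 * d : ℤ) : R) := by
  obtain ⟨k, rfl⟩ := hx
  obtain ⟨l, rfl⟩ := hy
  obtain ⟨e, rfl⟩ := hd
  exact ⟨k * l * e, by simp only [zsmul_eq_mul]; push_cast; ring⟩

theorem mem_zmultiples_of_two_nsmul_mem [IsAddTorsionFree R] {d : ℤ} {x : R}
    (hx : 2 • x ∈ zmultiples ((2 * d : ℤ) : R)) : x ∈ zmultiples (d : R) := by
  obtain ⟨k, hk⟩ := hx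
  refine ⟨k, (nsmul_right_inj two_ne_zero).mp ?_⟩
  rw [← hk]
  simp only [zsmul_eq_mul, nsmul_eq_mul]
  push_cast
  ring

theorem PowerSeries.coeff_mem_zmultiples_of_sq [IsAddTorsionFree R] {d : ℤ} (hd : Even d)
    {f : R⟦X⟧} (hf : constantCoeff f = 1)
    (hsq : ∀ n, 0 < n → coeff n (f ^ 2) ∈ zmultiples ((2 * d : ℤ) : R)) :
    ∀ n, 0 < n → coeff n f ∈ zmultiples (d : R) := by
  set g := f - 1 with hg
  have hg0 : coeff 0 g = 0 := by simp [g, hf]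
  have hfg : ∀ n, 0 < n → coeff n f = coeff n g := fun n hn => by
    simp [g, coeff_one, hn.ne']
  have hsq_g : ∀ n, 0 < n → coeff n (f ^ 2) = 2 • coeff n g + coeff n (g ^ 2) := fun n hn => by
    rw [show f ^ 2 = 1 + 2 • g + g ^ 2 by rw [hg]; ring, map_add, map_add, map_nsmul, coeff_one,
      if_neg hn.ne', zero_add]
  intro n hn
  induction n using Nat.strong_induction_on with
  | _ n ih =>
    have hg2 : coeff n (g ^ 2) ∈ zmultiples ((2 * d : ℤ) : R) := by
      rw [sq, coeff_mul]
      refine sum_mem fun ⟨i, j⟩ hij => ?_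
      rw [HasAntidiagonal.mem_antidiagonal] at hij
      rcases Nat.eq_zero_or_pos i with rfl | hi
      · simp [hg0]
      rcases Nat.eq_zero_or_pos j with rfl | hj
      · simp [hg0]
      rw [← hfg i hi, ← hfg j hj]
      exact mul_mem_zmultiples_two_mul_of_even hd (ih i (by omega) hi) (ih j (by omega) hj)
    rw [hfg n hn]
    refine mem_zmultiples_of_two_nsmul_mem ?_
    simpa [hsq_g n hn] using sub_mem (hsq n hn) hg2
end

theorem PowerSeries.coeff_rescale_binomialSeries {K : Type*} [Field K] [CharZero K] (a r : K)
    (n : ℕ) : coeff n (rescale a (binomialSeries K r)) = a ^ n * Ring.choose r n := by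
  rw [coeff_rescale, binomialSeries_coeff, smul_eq_mul, mul_one]

theorem coeff_one_sub_eight_mul_X_pow_neg_quarter (n : ℕ) :
    coeff n (rescale (-8 : ℚ) (binomialSeries ℚ (-4⁻¹ : ℚ))) =
      (2 : ℚ) ^ n / n.factorial * ∏ k ∈ range n, ((4 : ℚ) * k + 1) := by
  rw [coeff_rescale_binomialSeries, show (-8 : ℚ) = 2 * -4 by norm_num, mul_pow, mul_assoc,
    Ring.neg_pow_mul_choose_neg_inv four_ne_zero, mul_div_assoc', div_mul_eq_mul_div]

theorem coeff_one_sub_eight_mul_X_pow_neg_half (n : ℕ) :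
    coeff n (rescale (-8 : ℚ) (binomialSeries ℚ (-2⁻¹ : ℚ))) = (2 : ℚ) ^ n * n.centralBinom := by
  have hodd : (2 : ℚ) ^ n * ∏ k ∈ range n, (2 * (k : ℚ) + 1) = n.factorial * n.centralBinom := by
    exact_mod_cast Nat.two_pow_mul_prod_odd_eq_factorial_mul_centralBinom n
  rw [coeff_rescale_binomialSeries, show (-8 : ℚ) = 2 * 2 * -2 by norm_num, mul_pow, mul_pow,
    mul_assoc, Ring.neg_pow_mul_choose_neg_inv two_ne_zero]
  field_simp
  linear_combination hodd

/-- The coefficients of `(1 ± 8z)^(-1/4)` are integers: for all `n ≥ 0`,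
`(2^n / n!) * ∏_{k=0}^{n-1} (4k+1)` is an integer. -/
theorem coeffs_of_one_add_eight_z_pow_neg_quarter_isInt (n : ℕ) :
    ∃ z : ℤ, ((2 : ℚ) ^ n / Nat.factorial n) * ∏ k ∈ Finset.range n, ((4 : ℚ) * k + 1) = z := by
  set f : ℚ⟦X⟧ := rescale (-8) (binomialSeries ℚ (-4⁻¹ : ℚ)) with hf
  have hf0 : constantCoeff f = 1 := by
    rw [← coeff_zero_eq_constantCoeff_apply, coeff_one_sub_eight_mul_X_pow_neg_quarter]; simp
  have hsq : f ^ 2 = rescale (-8) (binomialSeries ℚ (-2⁻¹ : ℚ)) := by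
    rw [hf, sq, ← map_mul, ← binomialSeries_add]; norm_num
  have hsq_mem : ∀ n, 0 < n → coeff n (f ^ 2) ∈ zmultiples ((2 * 2 : ℤ) : ℚ) := fun n hn => by
    obtain ⟨c, hc⟩ := Nat.two_dvd_centralBinom_of_one_le hn
    obtain ⟨m, rfl⟩ := Nat.exists_eq_add_of_le' hn
    refine ⟨2 ^ m * c, ?_⟩
    simp only [hsq, coeff_one_sub_eight_mul_X_pow_neg_half, hc, zsmul_eq_mul]
    push_cast
    ring
  rcases n.eq_zero_or_pos with rfl | hn
  · exact ⟨1, by simp⟩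
  · obtain ⟨k, hk⟩ := coeff_mem_zmultiples_of_sq even_two hf0 hsq_mem n hn
    exact ⟨k * 2, by rw [← coeff_one_sub_eight_mul_X_pow_neg_quarter, ← hk]; simp⟩
end

section
/- Fix a prime p, polynomials q_0,...,q_ℓ ∈ ℤ[n], and nonnegative integers k_0,...,k_ℓ with k_i ≥ (1+i)·k_0 for 1 ≤ i ≤ ℓ. Suppose integers u_n satisfy (n+1)^2 u_{n+1} = p^{k_0} q_0(n) u_n + p^{k_1} q_1(n) u_{n-1} + ... + p^{k_ℓ} q_ℓ(n) u_{n-ℓ} with u_0 = 1 and u_{-1} = ... = u_{-ℓ} = 0. Then p^{⌈n(k_0 - 2/(p-1))⌉} divides u_n for all n ≥ 0. -/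
/-- Reduction theorem: if integers `u n` satisfy the holonomic recurrence
`(n+1)^2 u (n+1) = ∑_{i=0}^{ℓ} p^(k i) * q i (n) * u (n - i)` with `u 0 = 1`,
`u j = 0` for `j < 0`, and `k i ≥ (1+i) * k 0` for `1 ≤ i ≤ ℓ`, then
`p ^ ⌈n (k 0 - 2/(p-1))⌉` divides `u n` for all `n ≥ 0`. -/
theorem reduction_theorem (p : ℕ) (hp : p.Prime) (ℓ : ℕ)
    (q : Fin (ℓ + 1) → Polynomial ℤ) (k : Fin (ℓ + 1) → ℕ)
    (hk : ∀ i : Fin (ℓ + 1), 1 ≤ (i : ℕ) → ((i : ℕ) + 1) * k 0 ≤ k i)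
    (u : ℤ → ℤ) (hu0 : u 0 = 1) (huneg : ∀ j : ℤ, j < 0 → u j = 0)
    (hrec : ∀ n : ℕ, ((n : ℤ) + 1) ^ 2 * u (n + 1) =
      ∑ i : Fin (ℓ + 1), (p : ℤ) ^ (k i) * (q i).eval (n : ℤ) * u ((n : ℤ) - i)) :
    ∀ n : ℕ, (p : ℤ) ^ (Int.toNat ⌈(n : ℚ) * ((k 0 : ℚ) - 2 / ((p : ℚ) - 1))⌉) ∣ u n := by
  -- Key lemma: p^(n * k 0) divides (n!)^2 * u n.
  have key : ∀ n : ℕ, (p : ℤ) ^ (n * k 0) ∣ (n.factorial : ℤ) ^ 2 * u n := by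
    intro n
    induction n using Nat.strong_induction_on with
    | _ n ih =>
      match n with
      | 0 => simp [hu0]
      | Nat.succ m =>
        have hrm := hrec m
        have hfac : ((m + 1).factorial : ℤ) ^ 2 * u (m + 1)
            = ∑ i : Fin (ℓ + 1), (p : ℤ) ^ (k i) * (q i).eval (m : ℤ)
                * ((m.factorial : ℤ) ^ 2 * u ((m : ℤ) - i)) := by
          have : ((m + 1).factorial : ℤ) ^ 2 * u (m + 1)
              = (m.factorial : ℤ) ^ 2 * (((m : ℤ) + 1) ^ 2 * u (m + 1)) := by
            rw [Nat.factorial_succ]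
            push_cast
            ring
          rw [this, hrm, Finset.mul_sum]
          congr 1; ext i; ring
        simp only [Nat.succ_eq_add_one]
        push_cast
        rw [hfac]
        apply Finset.dvd_sum
        intro i _
        by_cases hi : (i : ℕ) ≤ m
        · -- u ((m : ℤ) - i) = u (m - i) with m - i : ℕ
          set j : ℕ := m - i with hj
          have hji : (m : ℤ) - i = (j : ℤ) := by
            have := Nat.cast_sub hi (R := ℤ); omega
          rw [hji]
          have hdvd1 : (p : ℤ) ^ (j * k 0) ∣ (j.factorial : ℤ) ^ 2 * u j :=
            ih j (by omega)
          have hdvd2 : ((j.factorial : ℤ)) ∣ (m.factorial : ℤ) := by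
            exact_mod_cast Nat.factorial_dvd_factorial (by omega)
          obtain ⟨c, hc⟩ := hdvd2
          have hdvd3 : (p : ℤ) ^ (j * k 0) ∣ (m.factorial : ℤ) ^ 2 * u j := by
            rw [hc]
            have : ((j.factorial : ℤ) * c) ^ 2 * u j
                = c ^ 2 * ((j.factorial : ℤ) ^ 2 * u j) := by ring
            rw [this]
            exact Dvd.dvd.mul_left hdvd1 _
          have hki : (m + 1) * k 0 ≤ k i + j * k 0 := by
            have h1 : ((i : ℕ) + 1) * k 0 ≤ k i := by
              rcases Nat.eq_zero_or_pos (i : ℕ) with h0 | h0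
              · have : (0 : Fin (ℓ + 1)) = i := by
                  apply Fin.ext; simp [h0]
                simp [← this, h0]
              · exact hk i h0
            have : j = m - (i : ℕ) := hj
            nlinarith [Nat.sub_add_cancel hi]
          calc (p : ℤ) ^ ((m + 1) * k 0) ∣ (p : ℤ) ^ (k i + j * k 0) :=
                pow_dvd_pow _ hki
            _ ∣ (p : ℤ) ^ (k i) * (q i).eval (m : ℤ) * ((m.factorial : ℤ) ^ 2 * u ((j : ℤ))) := by
                rw [pow_add]
                exact mul_dvd_mul (Dvd.dvd.mul_right dvd_rfl _) hdvd3
        · -- (m : ℤ) - i < 0, so u = 0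
          have : u ((m : ℤ) - i) = 0 := huneg _ (by push_cast; omega)
          simp [this]
  intro n
  set a := Int.toNat ⌈(n : ℚ) * ((k 0 : ℚ) - 2 / ((p : ℚ) - 1))⌉ with ha
  rcases Nat.eq_zero_or_pos a with ha0 | hapos
  · simp [ha0]
  -- a ≥ 1. Let v = p-adic valuation of n!.
  haveI : Fact p.Prime := ⟨hp⟩
  set v := (n.factorial).factorization p with hv
  have hvpadic : v = padicValNat p (n.factorial) :=
    Nat.factorization_def _ hp
  -- Legendre: (p-1) * v ≤ n
  have hleg : (p - 1) * v ≤ n := by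
    rw [hvpadic, sub_one_mul_padicValNat_factorial]
    omega
  have hp2 : 2 ≤ p := hp.two_le
  -- a + 2v ≤ n * k 0
  have hav : a + 2 * v ≤ n * k 0 := by
    have hceil : (⌈(n : ℚ) * ((k 0 : ℚ) - 2 / ((p : ℚ) - 1))⌉ : ℤ)
        ≤ (n * k 0 : ℕ) - 2 * (v : ℤ) := by
      rw [Int.ceil_le]
      push_cast
      rw [mul_sub]
      have hp1 : (0 : ℚ) < (p : ℚ) - 1 := by
        have : (2 : ℚ) ≤ (p : ℚ) := by exact_mod_cast hp2
        linarith
      have hc : ((p : ℚ) - 1) * v ≤ n := by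
        have hcast : ((p - 1 : ℕ) : ℚ) * (v : ℚ) ≤ (n : ℚ) := by exact_mod_cast hleg
        have heq : ((p - 1 : ℕ) : ℚ) = (p : ℚ) - 1 := by
          push_cast [Nat.cast_sub (by omega : 1 ≤ p)]; ring
        linarith [heq ▸ hcast]
      have h2 : 2 * (v : ℚ) ≤ (n : ℚ) * (2 / ((p : ℚ) - 1)) := by
        rw [mul_div_assoc', le_div_iff₀ hp1]
        nlinarith
      linarith
    have ha' : (a : ℤ) = ⌈(n : ℚ) * ((k 0 : ℚ) - 2 / ((p : ℚ) - 1))⌉ := by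
      rw [ha, Int.toNat_of_nonneg]
      by_contra hneg
      push_neg at hneg
      have : Int.toNat ⌈(n : ℚ) * ((k 0 : ℚ) - 2 / ((p : ℚ) - 1))⌉ = 0 :=
        Int.toNat_of_nonpos (le_of_lt hneg)
      omega
    have : (a : ℤ) + 2 * v ≤ (n * k 0 : ℕ) := by rw [ha']; omega
    exact_mod_cast this
  -- Decompose n! = p^v * m with ¬ p ∣ m
  have hfne : n.factorial ≠ 0 := Nat.factorial_ne_zero n
  set m := n.factorial / p ^ v with hm
  have hmeq : n.factorial = p ^ v * m := (Nat.ordProj_mul_ordCompl_eq_self n.factorial p).symm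
  have hpm : ¬ (p : ℤ) ∣ (m : ℤ) := by
    have := Nat.not_dvd_ordCompl hp hfne
    exact_mod_cast this
  have hkey := key n
  rw [show ((n.factorial : ℤ)) = (p : ℤ) ^ v * (m : ℤ) by exact_mod_cast hmeq] at hkey
  have hkey2 : (p : ℤ) ^ (a + 2 * v) ∣ (p : ℤ) ^ (2 * v) * ((m : ℤ) ^ 2 * u n) := by
    have : ((p : ℤ) ^ v * (m : ℤ)) ^ 2 * u n = (p : ℤ) ^ (2 * v) * ((m : ℤ) ^ 2 * u n) := by
      rw [pow_mul]; ring
    rw [← this]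
    exact dvd_trans (pow_dvd_pow _ hav) hkey
  have hpne : (p : ℤ) ≠ 0 := by exact_mod_cast hp.pos.ne'
  have hkey3 : (p : ℤ) ^ a ∣ (m : ℤ) ^ 2 * u n := by
    rw [add_comm, pow_add] at hkey2
    exact (mul_dvd_mul_iff_left (pow_ne_zero _ hpne)).mp hkey2
  have hcop : IsCoprime ((p : ℤ) ^ a) ((m : ℤ) ^ 2) :=
    IsCoprime.pow ((Nat.prime_iff_prime_int.mp hp).coprime_iff_not_dvd.mpr hpm)
  exact hcop.dvd_of_dvd_mul_left hkey3
end

section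
/- Define u_n by (n+1)^2 u_{n+1} = (10n^2+2) u_{n-1} - 9(n-1)^2 u_{n-3} with u_0 = 1, u_1 = 0, and u_{-1} = u_{-2} = u_{-3} = 0. Then u_{2n+1} = 0 for all n and u_{2n} = Σ_{k=0}^{n} binom(n,k)^2 binom(2k,k); consequently all u_n are integers. -/
open Finset

private lemma relC (n k : ℕ) :
    ((k : ℚ) + 1) * (n.choose (k + 1)) = ((n : ℚ) - k) * n.choose k := by
  rcases le_or_gt k n with h | h
  · have hh := Nat.choose_succ_right_eq n k
    have := congrArg (fun m : ℕ => (m : ℚ)) hh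
    push_cast [Nat.cast_sub h] at this
    linarith
  · rw [Nat.choose_eq_zero_of_lt (by omega), Nat.choose_eq_zero_of_lt h]
    push_cast; ring

private lemma relB (n k : ℕ) :
    ((n : ℚ) + 1) * (n.choose k) = ((n : ℚ) + 1 - k) * ((n + 1).choose k) := by
  rcases le_or_gt k (n + 1) with h | h
  · have hh := Nat.choose_mul_succ_eq n k
    have := congrArg (fun m : ℕ => (m : ℚ)) hh
    push_cast [Nat.cast_sub h] at this
    linarith
  · rw [Nat.choose_eq_zero_of_lt (by omega), Nat.choose_eq_zero_of_lt h]
    push_cast; ring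

private lemma relD (k : ℕ) :
    ((k : ℚ) + 1) * ((2 * (k + 1)).choose (k + 1)) = (4 * (k : ℚ) + 2) * ((2 * k).choose k) := by
  have hh := Nat.succ_mul_centralBinom_succ k
  have h1 : Nat.centralBinom (k + 1) = (2 * (k + 1)).choose (k + 1) := rfl
  have h2 : Nat.centralBinom k = (2 * k).choose k := rfl
  rw [h1, h2] at hh
  have := congrArg (fun m : ℕ => (m : ℚ)) hh
  push_cast at this ⊢
  linarith

/-- Summand. -/
private def Fq (n k : ℕ) : ℚ := (n.choose k : ℚ) ^ 2 * ((2 * k).choose k : ℚ)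

/-- Zeilberger certificate. -/
private def Gq (n k : ℕ) : ℚ :=
  (k : ℚ) * (3 * k - 4 * n - 4) * (n.choose (k - 1) : ℚ) ^ 2 * ((2 * k).choose k : ℚ)

private lemma perterm (n k : ℕ) :
    ((n : ℚ) + 2) ^ 2 * Fq (n + 2) k
      - (10 * ((n : ℚ) + 1) ^ 2 + 10 * ((n : ℚ) + 1) + 3) * Fq (n + 1) k
      + 9 * ((n : ℚ) + 1) ^ 2 * Fq n k
      = Gq (n + 1) (k + 1) - Gq (n + 1) k := by
  cases k with
  | zero =>
      simp only [Fq, Gq]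
      norm_num
      ring
  | succ m =>
      simp only [Fq, Gq, Nat.add_sub_cancel]
      have h1 : ((n + 2).choose (m + 1) : ℚ)
          = ((n + 1).choose m : ℚ) + ((n + 1).choose (m + 1) : ℚ) := by
        have := Nat.choose_succ_succ (n + 1) m
        push_cast [this]; ring
      have h2 := relB n (m + 1)
      have h3 := relC (n + 1) m
      have h4 := relD (m + 1)
      set x : ℚ := ((n + 1).choose (m + 1) : ℚ) with hx
      set y : ℚ := ((n + 1).choose m : ℚ) with hy
      set c : ℚ := ((2 * (m + 1)).choose (m + 1) : ℚ) with hc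
      set w : ℚ := (n.choose (m + 1) : ℚ) with hw
      set X : ℚ := ((n + 2).choose (m + 1) : ℚ) with hX
      set d : ℚ := ((2 * (m + 2)).choose (m + 2) : ℚ) with hd
      -- h1 : X = y + x ; h2 : (n+1) w = (n+1-(m+1)) x ; h3 : (m+1) x = (n+1-m) y
      -- h4 : (m+2) d = (4m+6) c
      push_cast at h1 h2 h3 h4 ⊢
      linear_combination
        (((n : ℚ) + 2) ^ 2 * c * (X + x + y)) * h1
        + (9 * c * (((n : ℚ) + 1) * w + ((n : ℚ) - m) * x)) * h2
        + (c * (-(3 * (m : ℚ) + 2 * n + 7) * x + (3 * (m : ℚ) + 1 - n) * y)) * h3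
        + ((4 * (n : ℚ) - 3 * m + 2) * x ^ 2) * h4

private def aseq (n : ℕ) : ℚ :=
  ∑ k ∈ Finset.range (n + 1), ((n.choose k : ℚ)) ^ 2 * ((2 * k).choose k : ℚ)

private lemma aseq_eq (n : ℕ) : aseq n = ∑ k ∈ Finset.range (n + 1), Fq n k := rfl

private lemma sum_ext (n m : ℕ) (h : n + 1 ≤ m) :
    aseq n = ∑ k ∈ Finset.range m, Fq n k := by
  rw [aseq_eq]
  apply Finset.sum_subset (Finset.range_subset_range.2 h)
  intro k _ hk
  simp only [Finset.mem_range, not_lt] at hk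
  simp [Fq, Nat.choose_eq_zero_of_lt (by omega : n < k)]

private lemma arec (n : ℕ) :
    ((n : ℚ) + 2) ^ 2 * aseq (n + 2)
      = (10 * ((n : ℚ) + 1) ^ 2 + 10 * ((n : ℚ) + 1) + 3) * aseq (n + 1)
        - 9 * ((n : ℚ) + 1) ^ 2 * aseq n := by
  have tele := Finset.sum_range_sub (fun k => Gq (n + 1) k) (n + 3)
  have hsum : ∑ k ∈ Finset.range (n + 3),
      (((n : ℚ) + 2) ^ 2 * Fq (n + 2) k
        - (10 * ((n : ℚ) + 1) ^ 2 + 10 * ((n : ℚ) + 1) + 3) * Fq (n + 1) k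
        + 9 * ((n : ℚ) + 1) ^ 2 * Fq n k)
      = Gq (n + 1) (n + 3) - Gq (n + 1) 0 := by
    rw [← tele]
    exact Finset.sum_congr rfl fun k _ => perterm n k
  have hG0 : Gq (n + 1) 0 = 0 := by simp [Gq]
  have hGend : Gq (n + 1) (n + 3) = 0 := by
    simp [Gq, Nat.choose_eq_zero_of_lt (by omega : n + 1 < n + 3 - 1)]
  rw [hG0, hGend, sub_zero] at hsum
  rw [Finset.sum_add_distrib, Finset.sum_sub_distrib, ← Finset.mul_sum, ← Finset.mul_sum,
    ← Finset.mul_sum] at hsum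
  rw [← sum_ext (n + 2) (n + 3) (by omega), ← sum_ext (n + 1) (n + 3) (by omega),
    ← sum_ext n (n + 3) (by omega)] at hsum
  linarith

/-- For the `Γ₀(12)` recurrence `(n+1)^2 u_{n+1} = (10n^2+2) u_{n-1} - 9(n-1)^2 u_{n-3}` with
`u 0 = 1`, `u 1 = 0` and `u j = 0` for `j < 0`, all odd-indexed terms vanish and
`u (2n) = ∑_{k=0}^{n} C(n,k)^2 C(2k,k)`; consequently all `u n` are integers. -/
theorem gamma0_12_closed_form (u : ℤ → ℚ) (hu0 : u 0 = 1) (hu1 : u 1 = 0)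
    (huneg : ∀ j : ℤ, j < 0 → u j = 0)
    (hrec : ∀ n : ℕ, ((n : ℚ) + 1) ^ 2 * u ((n : ℤ) + 1) =
      (10 * (n : ℚ) ^ 2 + 2) * u ((n : ℤ) - 1) - 9 * ((n : ℚ) - 1) ^ 2 * u ((n : ℤ) - 3)) :
    (∀ n : ℕ, u (2 * (n : ℤ) + 1) = 0) ∧
    (∀ n : ℕ, u (2 * (n : ℤ)) =
      ∑ k ∈ Finset.range (n + 1), ((n.choose k : ℚ)) ^ 2 * ((2 * k).choose k : ℚ)) ∧
    (∀ n : ℕ, ∃ z : ℤ, u n = z) := by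
  have hodd : ∀ n : ℕ, u (2 * (n : ℤ) + 1) = 0 := by
    intro n
    induction n using Nat.strong_induction_on with
    | _ n ih =>
      match n with
      | 0 => simpa using hu1
      | 1 =>
        have h := hrec 2
        norm_num at h ⊢
        rw [hu1, huneg (-1) (by norm_num)] at h
        linarith
      | (m + 2) =>
        have h := hrec (2 * (m + 2))
        have e1 : ((2 * (m + 2) : ℕ) : ℤ) + 1 = 2 * ((m + 2 : ℕ) : ℤ) + 1 := by push_cast; ring
        have e2 : ((2 * (m + 2) : ℕ) : ℤ) - 1 = 2 * ((m + 1 : ℕ) : ℤ) + 1 := by push_cast; ring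
        have e3 : ((2 * (m + 2) : ℕ) : ℤ) - 3 = 2 * ((m : ℕ) : ℤ) + 1 := by push_cast; ring
        rw [e1, e2, e3, ih (m + 1) (by omega), ih m (by omega)] at h
        have hc : ((2 * (m + 2 : ℕ) : ℚ) + 1) ^ 2 ≠ 0 := by positivity
        push_cast at h hc ⊢
        have h' : (2 * ((m : ℚ) + 2) + 1) ^ 2 * u (2 * ((m : ℤ) + 2) + 1) = 0 := by
          rw [h]; ring
        have := mul_eq_zero.1 h'
        rcases this with h'' | h''
        · exact absurd h'' (by positivity)
        · exact h''
  have heven : ∀ n : ℕ, u (2 * (n : ℤ)) = aseq n := by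
    intro n
    induction n using Nat.strong_induction_on with
    | _ n ih =>
      match n with
      | 0 => simpa [aseq] using hu0
      | 1 =>
        have h := hrec 1
        norm_num at h ⊢
        rw [hu0] at h
        have ha1 : aseq 1 = 3 := by
          norm_num [aseq, Finset.sum_range_succ]
        rw [ha1]
        linarith
      | (m + 2) =>
        have h := hrec (2 * m + 3)
        have e1 : ((2 * m + 3 : ℕ) : ℤ) + 1 = 2 * ((m + 2 : ℕ) : ℤ) := by push_cast; ring
        have e2 : ((2 * m + 3 : ℕ) : ℤ) - 1 = 2 * ((m + 1 : ℕ) : ℤ) := by push_cast; ring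
        have e3 : ((2 * m + 3 : ℕ) : ℤ) - 3 = 2 * ((m : ℕ) : ℤ) := by push_cast; ring
        rw [e1, e2, e3, ih (m + 1) (by omega), ih m (by omega)] at h
        have hr := arec m
        have hc : ((2 * (m : ℚ) + 4)) ^ 2 ≠ 0 := by positivity
        push_cast at h ⊢
        have h' : (2 * (m : ℚ) + 4) ^ 2 * u (2 * ((m : ℤ) + 2))
            = (2 * (m : ℚ) + 4) ^ 2 * aseq (m + 2) := by
          have lhs1 : (2 * (m : ℚ) + 4) ^ 2 * u (2 * ((m : ℤ) + 2))
              = (10 * (2 * (m : ℚ) + 3) ^ 2 + 2) * aseq (m + 1)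
                - 9 * (2 * (m : ℚ) + 3 - 1) ^ 2 * aseq m := by
            rw [← h]; ring
          rw [lhs1]
          have : (2 * (m : ℚ) + 4) ^ 2 * aseq (m + 2) = 4 * (((m : ℚ) + 2) ^ 2 * aseq (m + 2)) := by
            ring
          rw [this, hr]; ring
        exact mul_left_cancel₀ hc h'
  refine ⟨hodd, heven, ?_⟩
  intro n
  rcases Nat.even_or_odd n with ⟨m, hm⟩ | ⟨m, hm⟩
  · refine ⟨∑ k ∈ Finset.range (m + 1), (m.choose k : ℤ) ^ 2 * ((2 * k).choose k : ℤ), ?_⟩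
    have : ((n : ℤ)) = 2 * (m : ℤ) := by omega
    rw [this, heven m, aseq]
    push_cast
    rfl
  · refine ⟨0, ?_⟩
    have : ((n : ℤ)) = 2 * (m : ℤ) + 1 := by omega
    rw [this, hodd m]
    norm_num
end

section
/- Suppose (v_n) is a real sequence and (w_n) another sequence such that |w_{n+1} − v_{n+1}| ≤ max(|w_n − v_n|, ..., |w_{n−N} − v_{n−N}|) + ε/(n+1)^{3/2} for all n ≥ M, with w_j = v_j for j = M−N,...,M. Then |w_n − v_n| ≤ ζ(3/2)·ε for all n ≥ M, where ζ(3/2) = Σ_{k≥1} k^{−3/2}. -/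
/-!
By strong induction, `|w n - v n| ≤ ε * ∑_{M ≤ k < n} (k + 1) ^ (-3/2)` for `n ≥ M - N`: the
maximum of the previous `N + 1` errors is at most the largest of the partial-sum bounds, which is
the last one because the partial sums increase, and the step adds the next term. The partial sums
are in turn bounded by the full series.
-/

open Finset

theorem le_sum_Ico_of_le_sup'_add {e δ : ℕ → ℝ} {N M : ℕ} (hδ : ∀ k, 0 ≤ δ k)
    (hinit : ∀ j, M - N ≤ j → j ≤ M → e j ≤ 0)
    (hstep : ∀ n, M ≤ n →
      e (n + 1) ≤ (range (N + 1)).sup' nonempty_range_add_one (fun i => e (n - i)) + δ n) :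
    ∀ n, M - N ≤ n → e n ≤ ∑ k ∈ Ico M n, δ k := by
  intro n
  induction n using Nat.strong_induction_on with
  | _ n ih =>
    intro hn
    rcases le_or_gt n M with hnM | hMn
    · exact (hinit n hn hnM).trans (sum_nonneg fun k _ => hδ k)
    obtain ⟨m, rfl⟩ : ∃ m, n = m + 1 := ⟨n - 1, by omega⟩
    have hsup : (range (N + 1)).sup' nonempty_range_add_one (fun i => e (m - i)) ≤
        ∑ k ∈ Ico M m, δ k := by
      refine sup'_le _ _ fun i hi => ?_
      have hiN : i ≤ N := Nat.lt_succ_iff.mp (mem_range.mp hi)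
      calc e (m - i) ≤ ∑ k ∈ Ico M (m - i), δ k := ih (m - i) (by omega) (by omega)
        _ ≤ ∑ k ∈ Ico M m, δ k :=
          sum_le_sum_of_subset_of_nonneg (Ico_subset_Ico le_rfl (Nat.sub_le m i))
            fun k _ _ => hδ k
    calc e (m + 1) ≤ ∑ k ∈ Ico M m, δ k + δ m := (hstep m (by omega)).trans (by gcongr)
      _ = ∑ k ∈ Ico M (m + 1), δ k := (sum_Ico_succ_top (by omega) δ).symm

theorem le_tsum_of_le_sup'_add {e δ : ℕ → ℝ} {N M : ℕ} (hδ : ∀ k, 0 ≤ δ k) (hδs : Summable δ)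
    (hinit : ∀ j, M - N ≤ j → j ≤ M → e j ≤ 0)
    (hstep : ∀ n, M ≤ n →
      e (n + 1) ≤ (range (N + 1)).sup' nonempty_range_add_one (fun i => e (n - i)) + δ n)
    (n : ℕ) (hn : M - N ≤ n) : e n ≤ ∑' k, δ k :=
  (le_sum_Ico_of_le_sup'_add hδ hinit hstep n hn).trans (hδs.sum_le_tsum _ fun k _ => hδ k)

theorem summable_nat_add_one_rpow_neg_three_halves :
    Summable fun k : ℕ => ((k : ℝ) + 1) ^ (-(3 : ℝ) / 2) := by
  have h := (summable_nat_add_iff 1).mpr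
    (Real.summable_nat_rpow.mpr (by norm_num : -(3 : ℝ) / 2 < -1))
  exact_mod_cast h

theorem div_rpow_three_halves_eq_mul (ε x : ℝ) (hx : 0 ≤ x) :
    ε / x ^ ((3 : ℝ) / 2) = x ^ (-(3 : ℝ) / 2) * ε := by
  rw [neg_div, Real.rpow_neg hx, div_eq_inv_mul]

theorem cauchy_error_bound_general (N M : ℕ) (ε : ℝ) (hε : 0 < ε)
    (v w : ℕ → ℝ)
    (hinit : ∀ j : ℕ, M - N ≤ j → j ≤ M → w j = v j)
    (hstep : ∀ n : ℕ, M ≤ n →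
      |w (n + 1) - v (n + 1)| ≤
        (Finset.range (N + 1)).sup' (Finset.nonempty_range_add_one)
          (fun i => |w (n - i) - v (n - i)|) + ε / ((n : ℝ) + 1) ^ ((3 : ℝ) / 2)) :
    ∀ n : ℕ, M ≤ n → |w n - v n| ≤ (∑' k : ℕ, ((k : ℝ) + 1) ^ (-(3 : ℝ) / 2)) * ε := by
  intro n hn
  rw [← tsum_mul_right]
  refine le_tsum_of_le_sup'_add (e := fun n => |w n - v n|) (fun k => by positivity)
    (summable_nat_add_one_rpow_neg_three_halves.mul_right ε)
    (fun j hj₁ hj₂ => by rw [hinit j hj₁ hj₂, sub_self, abs_zero]) (fun m hm => ?_) n (by omega)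
  rw [← div_rpow_three_halves_eq_mul ε _ (by positivity)]
  exact hstep m hm

/-- If `|w_{n+1} - v_{n+1}| ≤ max_{0≤i≤N} |w_{n-i} - v_{n-i}| + ε/(n+1)^{3/2}` for `n ≥ M` and
`w_j = v_j` for `M - N ≤ j ≤ M`, then `|w_n - v_n| ≤ ζ(3/2) ε` for all `n ≥ M`. -/
theorem cauchy_error_bound (N M : ℕ) (hMN : N < M) (ε : ℝ) (hε : 0 < ε)
    (v w : ℕ → ℝ)
    (hinit : ∀ j : ℕ, M - N ≤ j → j ≤ M → w j = v j)
    (hstep : ∀ n : ℕ, M ≤ n →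
      |w (n + 1) - v (n + 1)| ≤
        (Finset.range (N + 1)).sup' (Finset.nonempty_range_add_one)
          (fun i => |w (n - i) - v (n - i)|) + ε / ((n : ℝ) + 1) ^ ((3 : ℝ) / 2)) :
    ∀ n : ℕ, M ≤ n → |w n - v n| ≤ (∑' k : ℕ, ((k : ℝ) + 1) ^ (-(3 : ℝ) / 2)) * ε :=
  cauchy_error_bound_general N M ε hε v w hinit hstep
end
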